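/- arXiv:0809.0110 — 2 statements merged into one kernel-verified Lean document; each statement's English description precedes it below -/
import Mathlib

section
/- Let N1 and N2 be phylogenetic networks on the same taxa set S. Then m(N1,N2) ≥ d_μ(N1,N2), where m(N1,N2) = (1/2)|Υ(N1) △ Υ(N2)| and d_μ(N1,N2) = (1/2)|μ(N1) △ μ(N2)|. -/
open scoped Classical

/-- Nested-label encoding type at nesting depth `n`: an atom of `S`, or a
multiset of encodings of smaller depth. -/
def NLT (S : Type) : ℕ → Type :=
  fun n => Nat.rec S (fun _ ih => S ⊕ Multiset ih) n

/-- A phylogenetic network on a set `S` of taxa: a rooted finite DAG whose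
leaves are bijectively labeled by `S`. -/
structure PhyloNetwork (S : Type) [Fintype S] : Type 1 where
  V : Type
  fintypeV : Fintype V
  arc : V → V → Prop
  acyclic : ∀ v, ¬ Relation.TransGen arc v v
  root : V
  rootConn : ∀ v, Relation.ReflTransGen arc root v
  lab : V → S
  labBij : ∀ s : S, ∃! v, (∀ w, ¬ arc v w) ∧ lab v = s

attribute [instance] PhyloNetwork.fintypeV

variable {S : Type} [Fintype S]

def PhyloNetwork.IsLeaf (N : PhyloNetwork S) (v : N.V) : Prop := ∀ w, ¬ N.arc v w

noncomputable def PhyloNetwork.children (N : PhyloNetwork S) (v : N.V) : Multiset N.V :=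
  (Finset.univ.filter (fun w => N.arc v w)).val

/-- The nested label of a node, encoded at depth `n` (meaningful as soon as
`n` exceeds the height of the node). -/
noncomputable def nlAux (N : PhyloNetwork S) : (n : ℕ) → N.V → NLT S n
  | 0 => fun v => N.lab v
  | n+1 => fun v =>
      if N.IsLeaf v then Sum.inl (N.lab v)
      else Sum.inr ((N.children v).map (nlAux N n))

/-- A sufficient encoding depth for comparing nodes of the two networks. -/
def fuel (N1 N2 : PhyloNetwork S) : ℕ := Fintype.card N1.V + Fintype.card N2.V

/-- `ℓ(u) = ℓ(v)`: the nested labels of `u` and `v` coincide. -/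
def sameNL (N1 N2 : PhyloNetwork S) (u : N1.V) (v : N2.V) : Prop :=
  ∀ n, fuel N1 N2 ≤ n → nlAux N1 n u = nlAux N2 n v

/-- Symmetric difference of multisets. -/
noncomputable def msd {X : Type*} (M1 M2 : Multiset X) : Multiset X :=
  (M1 - M2) + (M2 - M1)

/-- The nested labels representation `Υ(N)` (at encoding depth `n`). -/
noncomputable def upsilon (N : PhyloNetwork S) (n : ℕ) : Multiset (NLT S n) :=
  Finset.univ.val.map (nlAux N n)

/-- Nakhleh's dissimilarity measure `m`. -/
noncomputable def mdist (N1 N2 : PhyloNetwork S) : ℝ :=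
  (Multiset.card (msd (upsilon N1 (fuel N1 N2)) (upsilon N2 (fuel N1 N2))) : ℝ) / 2

/-- `m_i(v)`: number of directed paths from `v` to the leaf labeled `i`. -/
noncomputable def PhyloNetwork.mu (N : PhyloNetwork S) (v : N.V) (i : S) : ℕ :=
  Set.ncard {l : List N.V | l.Chain' N.arc ∧ l.head? = some v ∧
    ∃ w, l.getLast? = some w ∧ N.IsLeaf w ∧ N.lab w = i}

/-- The μ-representation of `N`: the multiset of μ-vectors of its nodes. -/
noncomputable def muRep (N : PhyloNetwork S) : Multiset (S → ℕ) :=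
  Finset.univ.val.map (fun v => N.mu v)

/-- The μ-distance. -/
noncomputable def dmu (N1 N2 : PhyloNetwork S) : ℝ :=
  (Multiset.card (msd (muRep N1) (muRep N2)) : ℝ) / 2

/-- Number of directed paths between two nodes. -/
noncomputable def numPaths (N : PhyloNetwork S) (u w : N.V) : ℕ :=
  Set.ncard {l : List N.V | l.Chain' N.arc ∧ l.head? = some u ∧ l.getLast? = some w}

/-- Leaf-label preserving isomorphism of phylogenetic networks. -/
def PhyloIso (N1 N2 : PhyloNetwork S) : Prop :=
  ∃ e : N1.V ≃ N2.V, (∀ u v, N1.arc u v ↔ N2.arc (e u) (e v)) ∧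
    ∀ v, N1.IsLeaf v → N2.lab (e v) = N1.lab v

/-- Height of a node: the largest length of a directed path from it to a leaf. -/
noncomputable def PhyloNetwork.height (N : PhyloNetwork S) (v : N.V) : ℕ :=
  sSup {k | ∃ l : List N.V, l.Chain' N.arc ∧ l.head? = some v ∧
    (∃ w, l.getLast? = some w ∧ N.IsLeaf w) ∧ l.length = k + 1}


/-! ### Auxiliary lemmas -/

set_option linter.unusedSectionVars false

section Aux

theorem chain_transGen {V : Type} {r : V → V → Prop} {a b : V} {l : List V}
    (h : List.Chain r a l) (hb : b ∈ l) : Relation.TransGen r a b := by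
  induction l generalizing a with
  | nil => simp at hb
  | cons c l ih =>
    rcases List.chain_cons.1 h with ⟨hac, hc⟩
    rcases List.mem_cons.1 hb with rfl | hb
    · exact Relation.TransGen.single hac
    · exact Relation.TransGen.head hac (ih hc hb)

theorem chain'_nodup {V : Type} {arc : V → V → Prop}
    (hacy : ∀ v, ¬ Relation.TransGen arc v v) {l : List V}
    (h : l.Chain' arc) : l.Nodup := by
  induction l with
  | nil => simp
  | cons a l ih =>
    have h' : List.Chain arc a l := h
    exact List.nodup_cons.2 ⟨fun hmem => hacy a (chain_transGen h' hmem),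
      ih (List.isChain_cons.1 h).2⟩

theorem finite_chains {V : Type} [Fintype V] {arc : V → V → Prop}
    (hacy : ∀ v, ¬ Relation.TransGen arc v v) (C : List V → Prop) :
    {l : List V | l.Chain' arc ∧ C l}.Finite := by
  have h2 : {l : List V | l.Nodup}.Finite := by
    have : Finite ↥{l : List V | l.Nodup} := Finite.of_equiv {l : List V // l.Nodup} (Equiv.refl _)
    exact Set.toFinite _
  exact Set.Finite.subset h2 (fun l hl => chain'_nodup hacy hl.1)

variable {S : Type} [Fintype S]

/-- The set of paths from `v` ending at a leaf labeled `i`. -/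
def PhyloNetwork.pathsTo (N : PhyloNetwork S) (v : N.V) (i : S) : Set (List N.V) :=
  {l : List N.V | l.Chain' N.arc ∧ l.head? = some v ∧
    ∃ w, l.getLast? = some w ∧ N.IsLeaf w ∧ N.lab w = i}

theorem PhyloNetwork.mu_eq_ncard (N : PhyloNetwork S) (v : N.V) (i : S) :
    N.mu v i = (N.pathsTo v i).ncard := rfl

theorem PhyloNetwork.pathsTo_finite (N : PhyloNetwork S) (v : N.V) (i : S) :
    (N.pathsTo v i).Finite := by
  have := finite_chains N.acyclic (fun l : List N.V => l.head? = some v ∧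
    ∃ w, l.getLast? = some w ∧ N.IsLeaf w ∧ N.lab w = i)
  exact this.subset (fun l hl => by exact ⟨hl.1, hl.2.1, hl.2.2⟩)

theorem PhyloNetwork.childWf (N : PhyloNetwork S) :
    WellFounded (fun c v : N.V => N.arc v c) := by
  have ht : IsTrans N.V (fun a b => Relation.TransGen N.arc b a) :=
    ⟨fun a b c h1 h2 => h2.trans h1⟩
  have hi : IsIrrefl N.V (fun a b => Relation.TransGen N.arc b a) :=
    ⟨fun a h => N.acyclic a h⟩
  exact Subrelation.wf (fun {a b} h => Relation.TransGen.single h)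
    (Finite.wellFounded_of_trans_of_irrefl _)

/-- Every node has a path to a leaf. -/
theorem PhyloNetwork.exists_path_to_leaf (N : PhyloNetwork S) (v : N.V) :
    ∃ l : List N.V, l.Chain' N.arc ∧ l.head? = some v ∧
      ∃ w, l.getLast? = some w ∧ N.IsLeaf w := by
  induction v using WellFounded.induction N.childWf with
  | _ v ih =>
    by_cases hv : N.IsLeaf v
    · exact ⟨[v], List.isChain_singleton v, by simp, v, by simp, hv⟩
    · simp only [PhyloNetwork.IsLeaf, not_forall, not_not] at hv
      obtain ⟨c, hc⟩ := hv
      obtain ⟨l, hl1, hl2, w, hw1, hw2⟩ := ih c hc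
      have hlne : l ≠ [] := by rintro rfl; simp at hl2
      refine ⟨v :: l, ?_, rfl, w, ?_, hw2⟩
      · exact List.isChain_cons.2 ⟨fun y hy => by rw [hl2] at hy; cases hy; exact hc, hl1⟩
      · exact List.mem_getLast?_cons hw1

/-- The set of path lengths (minus one) from `v` to leaves. -/
def PhyloNetwork.hset (N : PhyloNetwork S) (v : N.V) : Set ℕ :=
  {k | ∃ l : List N.V, l.Chain' N.arc ∧ l.head? = some v ∧
    (∃ w, l.getLast? = some w ∧ N.IsLeaf w) ∧ l.length = k + 1}

theorem PhyloNetwork.height_eq (N : PhyloNetwork S) (v : N.V) :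
    N.height v = sSup (N.hset v) := rfl

theorem PhyloNetwork.hset_nonempty (N : PhyloNetwork S) (v : N.V) : (N.hset v).Nonempty := by
  obtain ⟨l, h1, h2, w, h3, h4⟩ := N.exists_path_to_leaf v
  have hlne : l ≠ [] := by rintro rfl; simp at h2
  have : l.length = (l.length - 1) + 1 := by
    have := List.length_pos_iff.2 hlne; omega
  exact ⟨l.length - 1, l, h1, h2, ⟨w, h3, h4⟩, this⟩

theorem PhyloNetwork.hset_bdd (N : PhyloNetwork S) (v : N.V) {k : ℕ} (hk : k ∈ N.hset v) :
    k + 1 ≤ Fintype.card N.V := by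
  obtain ⟨l, h1, _, _, h4⟩ := hk
  calc k + 1 = l.length := h4.symm
    _ ≤ Fintype.card N.V := (chain'_nodup N.acyclic h1).length_le_card

theorem PhyloNetwork.height_mem (N : PhyloNetwork S) (v : N.V) : N.height v ∈ N.hset v := by
  refine Nat.sSup_mem (N.hset_nonempty v) ⟨Fintype.card N.V, fun k hk => ?_⟩
  have := N.hset_bdd v hk; omega

theorem PhyloNetwork.height_le (N : PhyloNetwork S) (v : N.V) :
    N.height v + 1 ≤ Fintype.card N.V := N.hset_bdd v (N.height_mem v)

theorem PhyloNetwork.height_lt_of_arc (N : PhyloNetwork S) {v c : N.V} (h : N.arc v c) :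
    N.height c < N.height v := by
  obtain ⟨l, h1, h2, ⟨w, h3, h4⟩, h5⟩ := N.height_mem c
  have hlne : l ≠ [] := by rintro rfl; simp at h2
  have hmem : N.height c + 1 ∈ N.hset v := by
    refine ⟨v :: l, ?_, rfl, ⟨w, ?_, h4⟩, by simp [h5]⟩
    · exact List.isChain_cons.2 ⟨fun y hy => by rw [h2] at hy; cases hy; exact h, h1⟩
    · exact List.mem_getLast?_cons h3
  have hbdd : BddAbove (N.hset v) := ⟨Fintype.card N.V, fun k hk => by
    have := N.hset_bdd v hk; omega⟩
  have := le_csSup hbdd hmem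
  have hh : N.height v = sSup (N.hset v) := rfl
  omega

end Aux

section MuRec

variable {S : Type} [Fintype S]

theorem ncard_finset_biUnion {α β : Type*} (F : Finset α) (f : α → Set β)
    (hfin : ∀ a ∈ F, (f a).Finite)
    (hdisj : ∀ a ∈ F, ∀ b ∈ F, a ≠ b → Disjoint (f a) (f b)) :
    (⋃ a ∈ F, f a).ncard = ∑ a ∈ F, (f a).ncard := by
  classical
  induction F using Finset.induction with
  | empty => simp
  | @insert a F ha ih =>
    have hdisj2 : Disjoint (f a) (⋃ b ∈ F, f b) := by
      rw [Set.disjoint_left]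
      intro x hxa hxU
      rw [Set.mem_iUnion₂] at hxU
      obtain ⟨b, hbF, hxb⟩ := hxU
      have hab : a ≠ b := by rintro rfl; exact ha hbF
      exact Set.disjoint_left.1
        (hdisj a (Finset.mem_insert_self a F) b (Finset.mem_insert_of_mem hbF) hab) hxa hxb
    have hfinU : (⋃ b ∈ F, f b).Finite :=
      Set.Finite.biUnion F.finite_toSet (fun b hb => hfin b (Finset.mem_insert_of_mem hb))
    rw [Finset.set_biUnion_insert, Finset.sum_insert ha,
      Set.ncard_union_eq hdisj2 (hfin a (Finset.mem_insert_self a F)) hfinU,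
      ih (fun b hb => hfin b (Finset.mem_insert_of_mem hb))
        (fun b hb c hc => hdisj b (Finset.mem_insert_of_mem hb) c (Finset.mem_insert_of_mem hc))]

theorem PhyloNetwork.mu_leaf (N : PhyloNetwork S) {v : N.V} (hv : N.IsLeaf v) (i : S) :
    N.mu v i = if N.lab v = i then 1 else 0 := by
  rw [N.mu_eq_ncard]
  have hst : N.pathsTo v i = if N.lab v = i then {[v]} else ∅ := by
    ext l
    constructor
    · rintro ⟨h1, h2, w, h3, h4, h5⟩
      cases l with
      | nil => simp at h2
      | cons a t =>
        have hav : a = v := by simpa using h2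
        subst hav
        cases t with
        | nil =>
          have hwv : w = a := by simpa using h3.symm
          subst hwv
          rw [if_pos h5]
          rfl
        | cons c t' =>
          exact absurd (List.isChain_cons_cons.1 h1).1 (hv c)
    · intro hl
      by_cases hlab : N.lab v = i
      · rw [if_pos hlab] at hl
        cases hl
        exact ⟨List.isChain_singleton v, rfl, v, by simp, hv, hlab⟩
      · rw [if_neg hlab] at hl
        exact absurd hl (Set.notMem_empty l)
  rw [hst]
  split
  · exact Set.ncard_singleton _
  · exact Set.ncard_empty _

theorem PhyloNetwork.mu_internal (N : PhyloNetwork S) {v : N.V} (hv : ¬ N.IsLeaf v) (i : S) :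
    N.mu v i = ((N.children v).map (fun c => N.mu c i)).sum := by
  classical
  set F : Finset N.V := Finset.univ.filter (fun w => N.arc v w) with hF
  have himg : N.pathsTo v i = (fun t => v :: t) '' (⋃ c ∈ F, N.pathsTo c i) := by
    ext l
    constructor
    · rintro ⟨h1, h2, w, h3, h4, h5⟩
      cases l with
      | nil => simp at h2
      | cons a t =>
        have hav : a = v := by simpa using h2
        subst hav
        cases t with
        | nil =>
          have hwv : w = a := by simpa using h3.symm
          subst hwv
          exact absurd h4 hv
        | cons c t' =>
          obtain ⟨hac, ht⟩ := List.isChain_cons_cons.1 h1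
          refine ⟨c :: t', Set.mem_iUnion₂.2 ⟨c, ?_, ht, rfl, w, ?_, h4, h5⟩, rfl⟩
          · simp [hF, hac]
          · rwa [List.getLast?_cons_cons] at h3
    · rintro ⟨t, ht, rfl⟩
      rw [Set.mem_iUnion₂] at ht
      obtain ⟨c, hcF, h1, h2, w, h3, h4, h5⟩ := ht
      have hac : N.arc v c := by simpa [hF] using hcF
      refine ⟨List.isChain_cons.2 ⟨fun y hy => by rw [h2] at hy; cases hy; exact hac, h1⟩,
        rfl, w, List.mem_getLast?_cons h3, h4, h5⟩
  have hinj : Function.Injective (fun t : List N.V => v :: t) :=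
    fun a b h => by simpa using h
  rw [N.mu_eq_ncard, himg, Set.ncard_image_of_injective _ hinj,
    ncard_finset_biUnion F _ (fun c _ => N.pathsTo_finite c i)]
  · show ∑ c ∈ F, (N.pathsTo c i).ncard = _
    have : N.children v = F.val := rfl
    rw [this]
    rfl
  · intro a _ b _ hab
    rw [Set.disjoint_left]
    rintro x ⟨_, hxa, _⟩ ⟨_, hxb, _⟩
    rw [hxa] at hxb
    exact hab (by simpa using hxb)

end MuRec

section Key

variable {S : Type} [Fintype S]

theorem sum_map_eq_of_rel {α β γ : Type*} [AddCommMonoid γ] {r : α → β → Prop}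
    {s : Multiset α} {t : Multiset β} (h : Multiset.Rel r s t)
    {f : α → γ} {g : β → γ} (hfg : ∀ a ∈ s, ∀ b ∈ t, r a b → f a = g b) :
    (s.map f).sum = (t.map g).sum := by
  induction h with
  | zero => simp
  | @cons a b as bs hab hrel ih =>
    rw [Multiset.map_cons, Multiset.map_cons, Multiset.sum_cons, Multiset.sum_cons,
      hfg a (Multiset.mem_cons_self a as) b (Multiset.mem_cons_self b bs) hab,
      ih (fun x hx y hy hr =>
        hfg x (Multiset.mem_cons_of_mem hx) y (Multiset.mem_cons_of_mem hy) hr)]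

theorem mem_children_arc (N : PhyloNetwork S) {v c : N.V} (h : c ∈ N.children v) :
    N.arc v c := by
  simpa [PhyloNetwork.children] using h

theorem key_lemma (N1 N2 : PhyloNetwork S) :
    ∀ (u : N1.V) (n : ℕ) (v : N2.V), N1.height u ≤ n → N2.height v ≤ n →
      nlAux N1 (n+1) u = nlAux N2 (n+1) v → N1.mu u = N2.mu v := by
  intro u
  induction u using WellFounded.induction N1.childWf with
  | _ u ih =>
    intro n v hu hv heq
    simp only [nlAux] at heq
    by_cases hu1 : N1.IsLeaf u <;> by_cases hv1 : N2.IsLeaf v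
    · erw [if_pos hu1, if_pos hv1] at heq
      have hlab : N1.lab u = N2.lab v := by
        have := Sum.inl.inj heq
        exact this
      funext i
      rw [N1.mu_leaf hu1, N2.mu_leaf hv1, hlab]
    · erw [if_pos hu1, if_neg hv1] at heq
      exact absurd heq (Sum.inl_ne_inr)
    · erw [if_neg hu1, if_pos hv1] at heq
      exact absurd heq (Sum.inr_ne_inl)
    · erw [if_neg hu1, if_neg hv1] at heq
      have hmap : (N1.children u).map (nlAux N1 n) = (N2.children v).map (nlAux N2 n) :=
        Sum.inr.inj heq
      have hrel : Multiset.Rel (fun c d => nlAux N1 n c = nlAux N2 n d)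
          (N1.children u) (N2.children v) := by
        rw [← Multiset.rel_eq] at hmap
        rwa [Multiset.rel_map] at hmap
      -- n must be positive since u is internal
      obtain ⟨c0, hc0⟩ : ∃ c, N1.arc u c := by
        simp only [PhyloNetwork.IsLeaf, not_forall, not_not] at hu1
        exact hu1
      have hn : 1 ≤ n := by
        have := N1.height_lt_of_arc hc0
        omega
      obtain ⟨m, rfl⟩ : ∃ m, n = m + 1 := ⟨n - 1, by omega⟩
      funext i
      rw [N1.mu_internal hu1, N2.mu_internal hv1]
      refine sum_map_eq_of_rel hrel (fun c hc d hd hr => ?_)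
      have hac : N1.arc u c := mem_children_arc N1 hc
      have had : N2.arc v d := mem_children_arc N2 hd
      have hcu : N1.height c ≤ m := by
        have := N1.height_lt_of_arc hac; omega
      have hdv : N2.height d ≤ m := by
        have := N2.height_lt_of_arc had; omega
      exact congrFun (ih c hac m d hcu hdv hr) i

end Key

section Msd

theorem sub_eq_sub_inter {α : Type*} [DecidableEq α] (s t : Multiset α) :
    s - t = s - (s ∩ t) := by
  ext a
  rw [Multiset.count_sub, Multiset.count_sub, Multiset.count_inter]
  omega

theorem card_msd {α : Type*} (u v : Multiset α) : Multiset.card (msd u v) =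
    Multiset.card u + Multiset.card v - 2 * Multiset.card (u ∩ v) := by
  classical
  have h1 : Multiset.card (u - v) = Multiset.card u - Multiset.card (u ∩ v) := by
    rw [sub_eq_sub_inter, Multiset.card_sub (Multiset.inter_le_left (s := u) (t := v))]
  have h2 : Multiset.card (v - u) = Multiset.card v - Multiset.card (v ∩ u) := by
    rw [sub_eq_sub_inter, Multiset.card_sub (Multiset.inter_le_left (s := v) (t := u))]
  rw [Multiset.inter_comm v u] at h2
  have h3 : Multiset.card (u ∩ v) ≤ Multiset.card u :=
    Multiset.card_le_card (Multiset.inter_le_left (s := u) (t := v))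
  have h4 : Multiset.card (u ∩ v) ≤ Multiset.card v :=
    Multiset.card_le_card (Multiset.inter_le_right (s := u) (t := v))
  rw [msd, Multiset.card_add, h1, h2]
  omega

theorem card_msd_map_le {α β : Type*} (s t : Multiset α) (f : α → β) :
    Multiset.card (msd (s.map f) (t.map f)) ≤ Multiset.card (msd s t) := by
  classical
  have hle : Multiset.card (s ∩ t) ≤ Multiset.card (s.map f ∩ t.map f) := by
    have h1 : (s ∩ t).map f ≤ s.map f ∩ t.map f :=
      Multiset.le_inter (Multiset.map_le_map (Multiset.inter_le_left (s := s) (t := t)))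
        (Multiset.map_le_map (Multiset.inter_le_right (s := s) (t := t)))
    have := Multiset.card_le_card h1
    simpa using this
  have h3 : Multiset.card (s ∩ t) ≤ Multiset.card s :=
    Multiset.card_le_card (Multiset.inter_le_left (s := s) (t := t))
  have h4 : Multiset.card (s ∩ t) ≤ Multiset.card t :=
    Multiset.card_le_card (Multiset.inter_le_right (s := s) (t := t))
  rw [card_msd, card_msd, Multiset.card_map, Multiset.card_map]
  omega

end Msd

/-- Nakhleh's measure refines the μ-distance: `m(N1,N2) ≥ d_μ(N1,N2)`. -/
theorem mdist_ge_dmu (N1 N2 : PhyloNetwork S) :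
    dmu N1 N2 ≤ mdist N1 N2 := by
  classical
  set n := fuel N1 N2 with hn
  obtain ⟨m, hm⟩ : ∃ m, n = m + 1 := by
    have h1 : 1 ≤ Fintype.card N2.V := Fintype.card_pos_iff.2 ⟨N2.root⟩
    exact ⟨n - 1, by simp only [hn, fuel]; omega⟩
  have hh1 : ∀ u : N1.V, N1.height u ≤ m := by
    intro u
    have := N1.height_le u
    have h2 : 1 ≤ Fintype.card N2.V := Fintype.card_pos_iff.2 ⟨N2.root⟩
    simp only [hn, fuel] at hm
    omega
  have hh2 : ∀ v : N2.V, N2.height v ≤ m := by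
    intro v
    have := N2.height_le v
    have h1 : 1 ≤ Fintype.card N1.V := Fintype.card_pos_iff.2 ⟨N1.root⟩
    simp only [hn, fuel] at hm
    omega
  -- the μ-vector is a function of the nested label
  set f : NLT S n → (S → ℕ) := fun x =>
    if h : ∃ u : N1.V, nlAux N1 n u = x then N1.mu h.choose
    else if h2 : ∃ v : N2.V, nlAux N2 n v = x then N2.mu h2.choose
    else fun _ => 0 with hf
  have hcross : ∀ (u : N1.V) (v : N2.V), nlAux N1 n u = nlAux N2 n v →
      N1.mu u = N2.mu v := by
    intro u v heq
    rw [hm] at heq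
    exact key_lemma N1 N2 u m v (hh1 u) (hh2 v) heq
  have hself1 : ∀ (u u' : N1.V), nlAux N1 n u = nlAux N1 n u' → N1.mu u = N1.mu u' := by
    intro u u' heq
    rw [hm] at heq
    exact key_lemma N1 N1 u m u' (hh1 u) (hh1 u') heq
  have hself2 : ∀ (v v' : N2.V), nlAux N2 n v = nlAux N2 n v' → N2.mu v = N2.mu v' := by
    intro v v' heq
    rw [hm] at heq
    exact key_lemma N2 N2 v m v' (hh2 v) (hh2 v') heq
  have hmu1 : muRep N1 = (upsilon N1 n).map f := by
    rw [muRep, upsilon, Multiset.map_map]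
    refine Multiset.map_congr rfl (fun u _ => ?_)
    show N1.mu u = f (nlAux N1 n u)
    rw [hf]
    beta_reduce
    have h : ∃ u' : N1.V, nlAux N1 n u' = nlAux N1 n u := ⟨u, rfl⟩
    rw [dif_pos h]
    exact (hself1 h.choose u h.choose_spec).symm
  have hmu2 : muRep N2 = (upsilon N2 n).map f := by
    rw [muRep, upsilon, Multiset.map_map]
    refine Multiset.map_congr rfl (fun v _ => ?_)
    show N2.mu v = f (nlAux N2 n v)
    rw [hf]
    beta_reduce
    by_cases h : ∃ u : N1.V, nlAux N1 n u = nlAux N2 n v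
    · rw [dif_pos h]
      exact (hcross h.choose v h.choose_spec).symm
    · rw [dif_neg h]
      have h2 : ∃ v' : N2.V, nlAux N2 n v' = nlAux N2 n v := ⟨v, rfl⟩
      rw [dif_pos h2]
      exact (hself2 h2.choose v h2.choose_spec).symm
  have hcard : Multiset.card (msd (muRep N1) (muRep N2)) ≤
      Multiset.card (msd (upsilon N1 n) (upsilon N2 n)) := by
    rw [hmu1, hmu2]
    exact card_msd_map_le _ _ f
  rw [dmu, mdist]
  have : (Multiset.card (msd (muRep N1) (muRep N2)) : ℝ) ≤
      (Multiset.card (msd (upsilon N1 n) (upsilon N2 n)) : ℝ) := by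
    exact_mod_cast hcard
  linarith
end

section
/- In any phylogenetic network, every node belonging to a clade is equivalent only to itself; that is, if v is a node of a clade of N and u is a node of N with ℓ(u) = ℓ(v), then u = v. -/
open scoped Classical

variable {S : Type} [Fintype S]

/-- Two leaves with the same label are equal. -/
lemma leaf_lab_eq (N : PhyloNetwork S) {u v : N.V} (hu : N.IsLeaf u) (hv : N.IsLeaf v)
    (h : N.lab u = N.lab v) : u = v := by
  obtain ⟨w, -, hw⟩ := N.labBij (N.lab v)
  exact (hw u ⟨hu, h⟩).trans (hw v ⟨hv, rfl⟩).symm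

/-- A chain in an acyclic digraph has no duplicates. -/
lemma chain_nodup (N : PhyloNetwork S) {l : List N.V} (h : l.Chain' N.arc) : l.Nodup := by
  by_contra hn
  obtain ⟨x, hx⟩ := List.exists_duplicate_iff_not_nodup.2 hn
  have hs : List.Sublist [x, x] l := List.duplicate_iff_sublist.1 hx
  have h2 : l.Chain' (Relation.TransGen N.arc) := h.imp fun _ _ hab => Relation.TransGen.single hab
  have h3 := h2.sublist hs
  rw [List.isChain_pair] at h3
  exact N.acyclic x h3

lemma mem_children (N : PhyloNetwork S) {v w : N.V} :
    w ∈ N.children v ↔ N.arc v w := by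
  simp [PhyloNetwork.children]

/-- Cancellation for `Multiset.map` when `f` is injective at elements of `M2`. -/
lemma multiset_map_cancel {α β : Type*} {f : α → β} :
    ∀ (M2 M1 : Multiset α), M1.map f = M2.map f →
      (∀ b ∈ M2, ∀ a, f a = f b → a = b) → M1 = M2 := by
  intro M2
  induction M2 using Multiset.induction_on with
  | empty =>
    intro M1 h _
    simpa using h
  | cons b M2' ih =>
    intro M1 h hinj
    have hfb : f b ∈ M1.map f := by rw [h]; simp
    obtain ⟨a, ha, hab⟩ := Multiset.mem_map.1 hfb
    have hab' : a = b := hinj b (by simp) a hab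
    subst hab'
    obtain ⟨M1', rfl⟩ := Multiset.exists_cons_of_mem ha
    have h' : M1'.map f = M2'.map f := by
      have := h
      simp only [Multiset.map_cons] at this
      exact (Multiset.cons_inj_right _).1 this
    have : M1' = M2' := ih M1' h' (fun b hb a hfa => hinj b (by simp [hb]) a hfa)
    rw [this]

lemma nlAux_succ (N : PhyloNetwork S) (n : ℕ) (v : N.V) :
    nlAux N (n + 1) v = (if N.IsLeaf v then Sum.inl (N.lab v)
      else Sum.inr ((N.children v).map (nlAux N n)) : S ⊕ Multiset (NLT S n)) := rfl

/-- Key lemma: if all chains starting at `v` have length at most `n+1`, `v` lies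
in a clade, and `u` has the same nested label as `v` at depth `n+1`, then `u = v`. -/
lemma key_lemma_s11 (N : PhyloNetwork S) : ∀ n (v : N.V),
    (∀ l : List N.V, l.Chain' N.arc → l.head? = some v → l.length ≤ n + 1) →
    (∀ w, Relation.ReflTransGen N.arc v w → ∀ p q, N.arc p w → N.arc q w → p = q) →
    ∀ u, nlAux N (n + 1) u = nlAux N (n + 1) v → u = v := by
  intro n
  induction n with
  | zero =>
    intro v hb hcl u h
    have hv : N.IsLeaf v := by
      intro w hw
      have := hb [v, w] (List.isChain_pair.2 hw) rfl
      simp at this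
    by_cases hu : N.IsLeaf u
    · rw [nlAux_succ, nlAux_succ, if_pos hu, if_pos hv] at h
      exact leaf_lab_eq N hu hv (Sum.inl.inj h)
    · rw [nlAux_succ, nlAux_succ, if_neg hu, if_pos hv] at h
      exact (Sum.inr_ne_inl h).elim
  | succ n ih =>
    intro v hb hcl u h
    by_cases hv : N.IsLeaf v
    · by_cases hu : N.IsLeaf u
      · rw [nlAux_succ, nlAux_succ, if_pos hu, if_pos hv] at h
        exact leaf_lab_eq N hu hv (Sum.inl.inj h)
      · rw [nlAux_succ, nlAux_succ, if_neg hu, if_pos hv] at h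
        exact (Sum.inr_ne_inl h).elim
    · by_cases hu : N.IsLeaf u
      · rw [nlAux_succ, nlAux_succ, if_pos hu, if_neg hv] at h
        exact (Sum.inl_ne_inr h).elim
      · rw [nlAux_succ, nlAux_succ, if_neg hu, if_neg hv] at h
        replace h := Sum.inr.inj h
        have hchild : N.children u = N.children v := by
          refine multiset_map_cancel _ _ h ?_
          intro b hb' a hfa
          have harc : N.arc v b := (mem_children N).1 hb'
          refine ih b ?_ ?_ a hfa
          · intro l hl hhd
            rcases l with _ | ⟨x, t⟩
            · simp at hhd
            · have hx : x = b := by simpa using hhd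
              subst hx
              have hc : (v :: x :: t).Chain' N.arc := by
                rw [List.Chain', List.isChain_cons_cons]
                exact ⟨harc, hl⟩
              have := hb (v :: x :: t) hc rfl
              simpa using this
          · intro w hw p q hp hq
            exact hcl w (Relation.ReflTransGen.head harc hw) p q hp hq
        obtain ⟨w, hw⟩ : ∃ w, N.arc v w := by
          by_contra hno
          push_neg at hno
          exact hv hno
        have hwu : N.arc u w := by
          have : w ∈ N.children u := hchild ▸ (mem_children N).2 hw
          exact (mem_children N).1 this
        exact hcl w (Relation.ReflTransGen.single hw) u v hwu hw

/-- Every node belonging to a clade (i.e., such that it and all its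
descendants are tree nodes) is equivalent only to itself: if `ℓ(u) = ℓ(v)`
for some node `u` of the network, then `u = v`. -/
theorem clade_node_equiv_only_itself (N : PhyloNetwork S) (v : N.V)
    (hclade : ∀ w, Relation.ReflTransGen N.arc v w →
      ∀ p q, N.arc p w → N.arc q w → p = q) :
    ∀ u : N.V, sameNL N N u v → u = v := by
  intro u hu
  have hcard : 1 ≤ Fintype.card N.V := Fintype.card_pos_iff.2 ⟨N.root⟩
  obtain ⟨m, hm⟩ : ∃ m, fuel N N = m + 1 := by
    refine ⟨fuel N N - 1, ?_⟩
    have : 1 ≤ fuel N N := by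
      unfold fuel; omega
    omega
  refine key_lemma_s11 N m v ?_ hclade u (hu (m + 1) (le_of_eq hm))
  intro l hl _
  have h1 : l.length ≤ Fintype.card N.V := (chain_nodup N hl).length_le_card
  have h2 : fuel N N = Fintype.card N.V + Fintype.card N.V := rfl
  omega
end
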